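/- arXiv:1108.3494 — 3 statements merged into one kernel-verified Lean document; each statement's English description precedes it below -/
import Mathlib

section
/- For every natural number m ≥ 1, Virza's function f : {0,1}^{(2m+1)²} → {0,1}, defined by f(x_{1,1},…,x_{2m+1,2m+1}) = ⋁_{i=1}^{2m+1} g(x_{i,1},…,x_{i,2m+1}) where g : {0,1}^{2m+1} → {0,1} satisfies g(y) = 1 iff either (there exists j ∈ [m] with y_{2j-1} = y_{2j} = 1 and y_k = 0 for all k ∉ {2j−1,2j}) or (y_{2m+1} = 1 and y_j = 0 for all j ≠ 2m+1), has sensitivity s(f) = 2m+1. -/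
section Defs

variable {ι : Type} [Fintype ι] [DecidableEq ι]

/-- `flipBit x i` is `x` with its `i`-th bit flipped. -/
def flipBit (x : ι → Bool) (i : ι) : ι → Bool :=
  Function.update x i (!x i)

/-- `flipBlock x B` is `x` with all bits indexed by `B` flipped. -/
def flipBlock (x : ι → Bool) (B : Finset ι) : ι → Bool :=
  fun j => if j ∈ B then !x j else x j

/-- The sensitivity of `f` at `x`: the number of `i` with `f (x^(i)) ≠ f x`. -/
def sensAt (f : (ι → Bool) → Bool) (x : ι → Bool) : ℕ :=
  (Finset.univ.filter fun i => f (flipBit x i) ≠ f x).card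

/-- The sensitivity `s(f) = max_x s(f,x)`. -/
def sens (f : (ι → Bool) → Bool) : ℕ :=
  Finset.univ.sup (sensAt f)

/-- The 0-sensitivity `s₀(f) = max_{x : f x = 0} s(f,x)`. -/
def sens0 (f : (ι → Bool) → Bool) : ℕ :=
  (Finset.univ.filter fun x => f x = false).sup (sensAt f)

/-- The 1-sensitivity `s₁(f) = max_{x : f x = 1} s(f,x)`. -/
def sens1 (f : (ι → Bool) → Bool) : ℕ :=
  (Finset.univ.filter fun x => f x = true).sup (sensAt f)

/-- The block sensitivity of `f` at `x`: the largest `b` such that there are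
`b` pairwise disjoint blocks on which flipping `x` changes the value of `f`. -/
noncomputable def bsAt (f : (ι → Bool) → Bool) (x : ι → Bool) : ℕ :=
  sSup {b : ℕ | ∃ Bl : Fin b → Finset ι,
    (Pairwise fun p q => Disjoint (Bl p) (Bl q)) ∧
    ∀ p, f (flipBlock x (Bl p)) ≠ f x}

/-- The block sensitivity `bs(f) = max_x bs(f,x)`. -/
noncomputable def bs (f : (ι → Bool) → Bool) : ℕ :=
  Finset.univ.sup (bsAt f)

/-- The 0-block-sensitivity `bs₀(f) = max_{x : f x = 0} bs(f,x)`. -/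
noncomputable def bs0 (f : (ι → Bool) → Bool) : ℕ :=
  (Finset.univ.filter fun x => f x = false).sup (bsAt f)

end Defs

/-! `f` is the OR of `2m+1` copies of `g` on disjoint rows. If `f x = 1`, only the bits of one
accepting row can be sensitive, so `s(f,x) ≤ 2m+1`. If `f x = 0`, every row rejects and `s(f,x)`
is the sum over the rows of the sensitivity of `g`. The accepting inputs of `g` are the indicators
of the blocks `{2k, 2k+1}` and `{2m}`, any two of which are at Hamming distance at least 3, so a
rejected input is adjacent to at most one of them and each row contributes at most 1. The all-zero
input, where every row is sensitive at its last bit, attains `2m+1`. -/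

section OrComposition

variable {ι κ : Type}

section
variable [DecidableEq ι] [DecidableEq κ]

lemma flipBit_row_self (x : ι × κ → Bool) (i : ι) (j : κ) :
    (fun k => flipBit x (i, j) (i, k)) = flipBit (fun k => x (i, k)) j := by
  funext k
  by_cases h : k = j
  · subst h
    simp [flipBit]
  · simp only [flipBit]
    rw [Function.update_of_ne (by simp [h]), Function.update_of_ne h]

lemma flipBit_row_of_ne (x : ι × κ → Bool) {i i' : ι} (j : κ) (h : i' ≠ i) :
    (fun k => flipBit x (i, j) (i', k)) = fun k => x (i', k) := by
  funext k
  exact Function.update_of_ne (by simp [h]) _ _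

end

variable {g : (κ → Bool) → Bool} {f : (ι × κ → Bool) → Bool}
  (hf : ∀ x, f x = true ↔ ∃ i, g (fun j => x (i, j)) = true)
include hf

lemma row_eq_false_of_eq_false {x : ι × κ → Bool} (hx : f x = false) (i : ι) :
    g (fun j => x (i, j)) = false := by
  simpa using fun h => (hf x).not.1 (by simp [hx]) ⟨i, h⟩

variable [DecidableEq ι] [DecidableEq κ] [Fintype ι] [Fintype κ]

lemma sensAt_le_card_of_eq_true {x : ι × κ → Bool} (hx : f x = true) :
    sensAt f x ≤ Fintype.card κ := by
  obtain ⟨i₀, hi₀⟩ := (hf x).1 hx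
  calc sensAt f x ≤ ({i₀} ×ˢ Finset.univ : Finset (ι × κ)).card := by
        refine Finset.card_le_card fun ⟨i, j⟩ hp => ?_
        simp only [Finset.mem_filter, Finset.mem_univ, true_and] at hp
        simp only [Finset.mem_product, Finset.mem_singleton, Finset.mem_univ, and_true]
        by_contra hi
        refine hp (((hf _).2 ⟨i₀, ?_⟩).trans hx.symm)
        rwa [flipBit_row_of_ne x j (Ne.symm hi)]
    _ = Fintype.card κ := by simp

lemma sensAt_eq_sum_of_eq_false {x : ι × κ → Bool} (hx : f x = false) :
    sensAt f x = ∑ i, sensAt g (fun j => x (i, j)) := by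
  have hrow := row_eq_false_of_eq_false hf hx
  have hsens : ∀ i j, f (flipBit x (i, j)) ≠ f x ↔
      g (flipBit (fun k => x (i, k)) j) ≠ g (fun k => x (i, k)) := by
    intro i j
    simp only [hx, hrow, ne_eq, Bool.not_eq_false, hf, ← flipBit_row_self]
    refine ⟨fun ⟨i', hi'⟩ => ?_, fun h => ⟨i, h⟩⟩
    by_cases h : i' = i
    · rwa [h] at hi'
    · simp [flipBit_row_of_ne x j h, hrow] at hi'
  simp only [sensAt, Finset.card_filter, Fintype.sum_prod_type, hsens]

lemma sens_le_max_card_sens0 :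
    sens f ≤ max (Fintype.card κ) (Fintype.card ι * sens0 g) := by
  refine Finset.sup_le fun x _ => ?_
  cases hx : f x
  · rw [sensAt_eq_sum_of_eq_false hf hx]
    refine le_max_of_le_right ?_
    calc ∑ i, sensAt g (fun j => x (i, j)) ≤ ∑ _i : ι, sens0 g :=
          Finset.sum_le_sum fun i _ =>
            Finset.le_sup (by simpa using row_eq_false_of_eq_false hf hx i)
      _ = Fintype.card ι * sens0 g := by simp
  · exact le_max_of_le_left (sensAt_le_card_of_eq_true hf hx)

lemma card_mul_sensAt_le_sens {y : κ → Bool} (hy : g y = false) :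
    Fintype.card ι * sensAt g y ≤ sens f := by
  have hx : f (fun p => y p.2) = false := by
    rw [← Bool.not_eq_true, hf]
    simp [hy]
  calc Fintype.card ι * sensAt g y = sensAt f (fun p => y p.2) := by
        simp [sensAt_eq_sum_of_eq_false hf hx]
    _ ≤ sens f := Finset.le_sup (Finset.mem_univ _)

end OrComposition

section MinimumDistance

variable {κ : Type} [Fintype κ] [DecidableEq κ]

lemma hammingDist_flipBit_le_one (y : κ → Bool) (j : κ) :
    hammingDist (flipBit y j) y ≤ 1 := by
  refine (Finset.card_le_card fun i hi => ?_).trans (Finset.card_singleton j).le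
  simp only [Finset.mem_filter, Finset.mem_univ, true_and] at hi
  by_contra h
  exact hi (Function.update_of_ne (by simpa using h) _ _)

lemma sens0_le_one_of_three_le_hammingDist {g : (κ → Bool) → Bool}
    (hg : ∀ u v, g u = true → g v = true → u ≠ v → 3 ≤ hammingDist u v) :
    sens0 g ≤ 1 := by
  refine Finset.sup_le fun y hy => Finset.card_le_one.2 fun j hj j' hj' => ?_
  simp only [Finset.mem_filter, Finset.mem_univ, true_and] at hy hj hj'
  simp only [hy, ne_eq, Bool.not_eq_false] at hj hj'
  by_contra hne
  have hflip : flipBit y j ≠ flipBit y j' := fun h => by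
    simpa [flipBit, Function.update_of_ne hne] using congrFun h j
  have h₁ := hammingDist_flipBit_le_one y j
  have h₂ := hammingDist_flipBit_le_one y j'
  rw [hammingDist_comm] at h₂
  have := hammingDist_triangle (flipBit y j) y (flipBit y j')
  have := hg _ _ hj hj' hflip
  omega

end MinimumDistance

section Virza

/-- The indicator of the block `{i | i / 2 = k}`: `{2k, 2k+1}` for `k < m`, `{2m}` for `k = m`. -/
def blockWord (m k : ℕ) : Fin (2*m+1) → Bool := fun i => decide ((i : ℕ) / 2 = k)

variable {m : ℕ}

lemma virza_accepts_iff (y : Fin (2*m+1) → Bool) :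
    ((∃ j : Fin m, ∀ i : Fin (2*m+1),
          y i = decide ((i : ℕ) = 2*(j : ℕ) ∨ (i : ℕ) = 2*(j : ℕ)+1)) ∨
       (∀ i : Fin (2*m+1), y i = decide ((i : ℕ) = 2*m))) ↔
    ∃ k ≤ m, y = blockWord m k := by
  constructor
  · rintro (⟨j, hj⟩ | hlast)
    · refine ⟨j, j.isLt.le, funext fun i => ?_⟩
      rw [hj, blockWord, decide_eq_decide]
      omega
    · refine ⟨m, le_rfl, funext fun i => ?_⟩
      rw [hlast, blockWord, decide_eq_decide]
      omega
  · rintro ⟨k, hk, rfl⟩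
    rcases hk.lt_or_eq with hk | rfl
    · exact .inl ⟨⟨k, hk⟩, fun i => by simp only [blockWord, decide_eq_decide]; omega⟩
    · exact .inr fun i => by simp only [blockWord, decide_eq_decide]; omega

lemma three_le_hammingDist_blockWord {k k' : ℕ} (hk : k ≤ m) (hk' : k' ≤ m) (hne : k ≠ k') :
    3 ≤ hammingDist (blockWord m k) (blockWord m k') := by
  wlog hlt : k < k' generalizing k k'
  · rw [hammingDist_comm]
    exact this hk' hk hne.symm (by omega)
  -- `blockWord m k` and `blockWord m k'` differ at `2k`, `2k+1` (a full pair, as `k < m`) and `2k'`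
  refine Finset.two_lt_card.2
    ⟨⟨2*k, by omega⟩, ?_, ⟨2*k+1, by omega⟩, ?_, ⟨2*k', by omega⟩, ?_, ?_, ?_, ?_⟩
    <;> simp [blockWord, Fin.ext_iff] <;> omega

lemma flipBit_zero_last : flipBit (fun _ => false) ⟨2*m, by omega⟩ = blockWord m m := by
  funext i
  simp only [flipBit, Function.update_apply, blockWord, Fin.ext_iff]
  split_ifs <;> simp <;> omega

end Virza

theorem virza_sens_general (m : ℕ)
    (g : (Fin (2*m+1) → Bool) → Bool)
    (hg : ∀ y : Fin (2*m+1) → Bool, g y = true ↔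
      ((∃ j : Fin m, ∀ i : Fin (2*m+1),
          y i = decide ((i : ℕ) = 2*(j : ℕ) ∨ (i : ℕ) = 2*(j : ℕ)+1)) ∨
       (∀ i : Fin (2*m+1), y i = decide ((i : ℕ) = 2*m))))
    (f : (Fin (2*m+1) × Fin (2*m+1) → Bool) → Bool)
    (hf : ∀ x : Fin (2*m+1) × Fin (2*m+1) → Bool,
      f x = true ↔ ∃ i : Fin (2*m+1), g (fun j => x (i, j)) = true) :
    sens f = 2*m+1 := by
  have hg_block : ∀ y, g y = true ↔ ∃ k ≤ m, y = blockWord m k :=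
    fun y => (hg y).trans (virza_accepts_iff y)
  have hcode : ∀ u v, g u = true → g v = true → u ≠ v → 3 ≤ hammingDist u v := by
    intro u v hu hv huv
    obtain ⟨k, hk, rfl⟩ := (hg_block u).1 hu
    obtain ⟨k', hk', rfl⟩ := (hg_block v).1 hv
    exact three_le_hammingDist_blockWord hk hk' fun h => huv (h ▸ rfl)
  have hzero : g (fun _ => false) = false := by
    rw [← Bool.not_eq_true, hg_block]
    rintro ⟨k, hk, h⟩
    simpa [blockWord] using congrFun h ⟨2*k, by omega⟩
  have hzero_sens : 1 ≤ sensAt g (fun _ => false) :=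
    Finset.card_pos.2 ⟨⟨2*m, by omega⟩,
      by simpa [hzero, flipBit_zero_last, hg_block] using ⟨m, le_rfl, rfl⟩⟩
  apply le_antisymm
  · calc sens f ≤ max (2*m+1) ((2*m+1) * sens0 g) := by simpa using sens_le_max_card_sens0 hf
      _ ≤ 2*m+1 := max_le le_rfl
          (by simpa using Nat.mul_le_mul_left (2*m+1) (sens0_le_one_of_three_le_hammingDist hcode))
  · calc 2*m+1 ≤ (2*m+1) * sensAt g (fun _ => false) := Nat.le_mul_of_pos_right _ hzero_sens
      _ ≤ sens f := by simpa using card_mul_sensAt_le_sens hf hzero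

/-- Virza's function `f : {0,1}^{(2m+1)²} → {0,1}`, the OR of `2m+1` disjoint copies of
`g : {0,1}^{2m+1} → {0,1}` where `g y = 1` iff `y` is 1 exactly on some pair
`{y_{2j-1}, y_{2j}}` (`j ∈ [m]`) or exactly on `y_{2m+1}`, has sensitivity `s(f) = 2m+1`. -/
theorem virza_sens (m : ℕ) (hm : 1 ≤ m)
    (g : (Fin (2*m+1) → Bool) → Bool)
    (hg : ∀ y : Fin (2*m+1) → Bool, g y = true ↔
      ((∃ j : Fin m, ∀ i : Fin (2*m+1),
          y i = decide ((i : ℕ) = 2*(j : ℕ) ∨ (i : ℕ) = 2*(j : ℕ)+1)) ∨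
       (∀ i : Fin (2*m+1), y i = decide ((i : ℕ) = 2*m))))
    (f : (Fin (2*m+1) × Fin (2*m+1) → Bool) → Bool)
    (hf : ∀ x : Fin (2*m+1) × Fin (2*m+1) → Bool,
      f x = true ↔ ∃ i : Fin (2*m+1), g (fun j => x (i, j)) = true) :
    sens f = 2*m+1 :=
  virza_sens_general m g hg f hf
end

section
/- For every natural number m ≥ 1, Virza's function f : {0,1}^{(2m+1)²} → {0,1}, defined by f(x_{1,1},…,x_{2m+1,2m+1}) = ⋁_{i=1}^{2m+1} g(x_{i,1},…,x_{i,2m+1}) where g : {0,1}^{2m+1} → {0,1} satisfies g(y) = 1 iff either (there exists j ∈ [m] with y_{2j-1} = y_{2j} = 1 and y_k = 0 for all k ∉ {2j−1,2j}) or (y_{2m+1} = 1 and y_j = 0 for all j ≠ 2m+1), has block sensitivity bs(f) = (2m+1)(m+1). Consequently bs(f) = (1/2)·s(f)² + (1/2)·s(f) for this f. -/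
/-!
At the all-zero input every one of the `2m+1` rows can be turned into each of the `m+1`
accepted patterns by flipping a block inside that row, and these `(2m+1)(m+1)` blocks are
disjoint. Conversely, a `1`-input is certified by a single accepted row, so it has at most `2m+1`
disjoint sensitive blocks, while at a `0`-input disjoint sensitive blocks produce distinct pairs
(row, accepted pattern). Distinct accepted patterns are at Hamming distance at least `3`, so a
rejected row has at most one sensitive bit; hence `s(f) = 2m+1`, attained at zero.
-/

open Finset

section BlockSensitivity

variable {ι : Type}

lemma card_le_of_pairwise_disjoint_of_meets {β : Type} [Fintype β] (C : Finset ι)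
    (Bl : β → Finset ι) (hd : Pairwise fun p q => Disjoint (Bl p) (Bl q))
    (hC : ∀ p, ∃ i ∈ C, i ∈ Bl p) :
    Fintype.card β ≤ C.card := by
  choose i hiC hiB using hC
  have hinj : Function.Injective fun p => (⟨i p, hiC p⟩ : C) := fun p q hpq => by
    by_contra hne
    have hi : i p = i q := congrArg Subtype.val hpq
    exact Finset.disjoint_left.mp (hd hne) (hiB p) (hi ▸ hiB q)
  simpa using Fintype.card_le_of_injective _ hinj

variable [DecidableEq ι]

lemma flipBlock_apply_ne_iff (x : ι → Bool) (B : Finset ι) (j : ι) :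
    flipBlock x B j ≠ x j ↔ j ∈ B := by
  unfold flipBlock
  split_ifs with h <;> simp [h]

lemma flipBlock_singleton (x : ι → Bool) (i : ι) : flipBlock x {i} = flipBit x i := by
  funext j
  by_cases h : j = i <;> simp [flipBlock, flipBit, h]

lemma flipBlock_eq_on_of_disjoint {x : ι → Bool} {B C : Finset ι} (h : Disjoint B C) :
    ∀ i ∈ C, flipBlock x B i = x i := fun i hi => by
  simp [flipBlock, Finset.disjoint_right.mp h hi]

variable {f : (ι → Bool) → Bool} {x : ι → Bool}

lemma bsAt_le {N : ℕ} (h : ∀ b (Bl : Fin b → Finset ι),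
    (Pairwise fun p q => Disjoint (Bl p) (Bl q)) →
    (∀ p, f (flipBlock x (Bl p)) ≠ f x) → b ≤ N) :
    bsAt f x ≤ N :=
  csSup_le' fun b ⟨Bl, hd, hs⟩ => h b Bl hd hs

lemma exists_mem_of_certificate {C B : Finset ι}
    (hC : ∀ y, (∀ i ∈ C, y i = x i) → f y = f x)
    (hB : f (flipBlock x B) ≠ f x) : ∃ i ∈ C, i ∈ B := by
  by_contra! h
  exact hB (hC _ (flipBlock_eq_on_of_disjoint (Finset.disjoint_right.mpr h)))

lemma bsAt_le_card_of_certificate (C : Finset ι)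
    (hC : ∀ y, (∀ i ∈ C, y i = x i) → f y = f x) : bsAt f x ≤ C.card :=
  bsAt_le fun b Bl hd hs => by
    simpa using card_le_of_pairwise_disjoint_of_meets C Bl hd fun p =>
      exists_mem_of_certificate hC (hs p)

variable [Fintype ι]

lemma le_bsAt {β : Type} [Fintype β] (Bl : β → Finset ι)
    (hd : Pairwise fun p q => Disjoint (Bl p) (Bl q)) (hs : ∀ p, f (flipBlock x (Bl p)) ≠ f x) :
    Fintype.card β ≤ bsAt f x := by
  refine le_csSup ⟨Fintype.card ι, fun b ⟨Bl', hd', hs'⟩ => ?_⟩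
    ⟨Bl ∘ (Fintype.equivFin β).symm, hd.comp_of_injective (Equiv.injective _), fun p => hs _⟩
  have hC : ∀ y, (∀ i ∈ (univ : Finset ι), y i = x i) → f y = f x := fun y hy =>
    congrArg f (funext fun i => hy i (mem_univ i))
  simpa using card_le_of_pairwise_disjoint_of_meets univ Bl' hd' fun p =>
    exists_mem_of_certificate hC (hs' p)

lemma sensAt_le_bsAt : sensAt f x ≤ bsAt f x := by
  have h := le_bsAt (f := f) (x := x)
    (fun i : {i // i ∈ univ.filter fun i => f (flipBit x i) ≠ f x} => {i.1})
    (fun p q hpq => Finset.disjoint_singleton.mpr (Subtype.coe_injective.ne hpq))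
    (fun i => by rw [flipBlock_singleton]; exact (Finset.mem_filter.mp i.2).2)
  rwa [Fintype.card_coe] at h

end BlockSensitivity

section HammingCode

variable {κ : Type} [Fintype κ] [DecidableEq κ]

lemma hammingDist_flipBit (y : κ → Bool) (j : κ) : hammingDist (flipBit y j) y = 1 := by
  rw [hammingDist, Finset.card_eq_one]
  refine ⟨j, Finset.ext fun i => ?_⟩
  by_cases h : i = j <;> simp [flipBit, Function.update_apply, h]

lemma hammingDist_flipBit_flipBit_le (y : κ → Bool) (j j' : κ) :
    hammingDist (flipBit y j) (flipBit y j') ≤ 2 := by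
  have := hammingDist_triangle (flipBit y j) y (flipBit y j')
  rwa [hammingDist_flipBit, hammingDist_comm y, hammingDist_flipBit] at this

lemma sensAt_le_one_of_three_le_hammingDist {g : (κ → Bool) → Bool} {y : κ → Bool}
    (hy : g y = false)
    (hcode : ∀ z w, g z = true → g w = true → z ≠ w → 3 ≤ hammingDist z w) :
    sensAt g y ≤ 1 := by
  refine Finset.card_le_one.mpr fun j hj j' hj' => ?_
  simp only [Finset.mem_filter, Finset.mem_univ, true_and, hy, ne_eq, Bool.not_eq_false] at hj hj'
  by_contra hne
  have hflip : flipBit y j ≠ flipBit y j' := fun h => by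
    simpa [flipBit, Function.update_apply, hne] using congrFun h j
  have := hcode _ _ hj hj' hflip
  have := hammingDist_flipBit_flipBit_le y j j'
  omega

end HammingCode

section OrComposition

variable {ρ κ : Type}

def row (x : ρ × κ → Bool) (i : ρ) : κ → Bool := fun j => x (i, j)

lemma row_flipBit_self [DecidableEq ρ] [DecidableEq κ] (x : ρ × κ → Bool) (i : ρ) (j : κ) :
    row (flipBit x (i, j)) i = flipBit (row x i) j := by
  funext j'
  by_cases h : j' = j <;> simp [row, flipBit, Function.update_apply, h]

lemma row_flipBit_of_ne [DecidableEq ρ] [DecidableEq κ] (x : ρ × κ → Bool) {i i' : ρ}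
    (j : κ) (h : i' ≠ i) : row (flipBit x (i, j)) i' = row x i' := by
  funext j'
  simp [row, flipBit, h]

variable [Fintype ρ]

def orRows (g : (κ → Bool) → Bool) (x : ρ × κ → Bool) : Bool :=
  decide (∃ i, g (row x i) = true)

variable {g : (κ → Bool) → Bool} {x : ρ × κ → Bool}

@[simp]
lemma orRows_eq_true_iff : orRows g x = true ↔ ∃ i, g (row x i) = true :=
  decide_eq_true_iff

lemma orRows_eq_false_iff : orRows g x = false ↔ ∀ i, g (row x i) = false := by
  simp [← Bool.not_eq_true]

variable [DecidableEq ρ] [DecidableEq κ]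

lemma orRows_flipBit_ne_iff (hx : orRows g x = false) (i : ρ) (j : κ) :
    orRows g (flipBit x (i, j)) ≠ orRows g x ↔ g (flipBit (row x i) j) ≠ g (row x i) := by
  rw [orRows_eq_false_iff] at hx
  rw [hx i, orRows_eq_false_iff.mpr hx, ne_eq, Bool.not_eq_false, ne_eq, Bool.not_eq_false,
    orRows_eq_true_iff]
  constructor
  · rintro ⟨i', hi'⟩
    by_cases h : i' = i
    · rwa [h, row_flipBit_self] at hi'
    · rw [row_flipBit_of_ne x j h, hx i'] at hi'
      exact absurd hi' Bool.false_ne_true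
  · exact fun h => ⟨i, by rwa [row_flipBit_self]⟩

variable [Fintype κ]

lemma sensAt_orRows_of_false (hx : orRows g x = false) :
    sensAt (orRows g) x = ∑ i, sensAt g (row x i) := by
  simp only [sensAt, Finset.card_filter, Fintype.sum_prod_type, orRows_flipBit_ne_iff hx]

lemma bsAt_orRows_le_of_true (hx : orRows g x = true) : bsAt (orRows g) x ≤ Fintype.card κ := by
  obtain ⟨i₀, hi₀⟩ := orRows_eq_true_iff.mp hx
  have hC : ∀ y, (∀ z ∈ ({i₀} ×ˢ univ : Finset (ρ × κ)), y z = x z) →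
      orRows g y = orRows g x :=
    fun y hy => by
      rw [hx, orRows_eq_true_iff]
      exact ⟨i₀, by rwa [show row y i₀ = row x i₀ from funext fun j => hy _ (by simp)]⟩
  simpa using bsAt_le_card_of_certificate _ hC

/-- A sensitive block at a rejected input turns some row `i` into an accepted row `r`; since row
`i` of `x` is rejected, the block contains a position where `r` differs from it, so disjoint
blocks yield distinct pairs `(i, r)`. -/
lemma bsAt_orRows_le_of_false (hx : orRows g x = false) :
    bsAt (orRows g) x ≤ Fintype.card ρ * Fintype.card {r // g r = true} := by
  refine bsAt_le fun b Bl hd hs => ?_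
  have hacc : ∀ p, ∃ i, g (row (flipBlock x (Bl p)) i) = true := fun p => by
    have := hs p
    rw [hx, ne_eq, Bool.not_eq_false] at this
    exact orRows_eq_true_iff.mp this
  choose i hi using hacc
  have hinj : Function.Injective fun p => (i p, (⟨_, hi p⟩ : {r // g r = true})) := by
    intro p q hpq
    simp only [Prod.mk.injEq, Subtype.mk.injEq] at hpq
    obtain ⟨hiq, hrow⟩ := hpq
    obtain ⟨j, hj⟩ : ∃ j, row (flipBlock x (Bl p)) (i p) j ≠ row x (i p) j := by
      by_contra! h
      have := orRows_eq_false_iff.mp hx (i p)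
      rw [← funext h, hi p] at this
      simp at this
    have hjq : row (flipBlock x (Bl q)) (i q) j ≠ row x (i q) j := by rwa [← hrow, ← hiq]
    by_contra hne
    refine Finset.disjoint_left.mp (hd hne) ((flipBlock_apply_ne_iff _ _ _).mp hj) ?_
    exact hiq ▸ (flipBlock_apply_ne_iff _ _ _).mp hjq
  simpa using Fintype.card_le_of_injective _ hinj

end OrComposition

section Virza

/-- For `k = m` the pair `{2k, 2k+1}` is cut off by the end of the row, leaving the singleton
`{2m}`; so the rows accepted by Virza's `g` are exactly the `pairPattern m k`, `k ≤ m`. -/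
def pairPattern (m : ℕ) (k : Fin (m + 1)) : Fin (2 * m + 1) → Bool :=
  fun i => decide ((i : ℕ) = 2 * (k : ℕ) ∨ (i : ℕ) = 2 * (k : ℕ) + 1)

def virzaRow (m : ℕ) (y : Fin (2 * m + 1) → Bool) : Bool :=
  decide (∃ k, y = pairPattern m k)

lemma virzaRow_eq_true_iff {m : ℕ} {y : Fin (2 * m + 1) → Bool} :
    virzaRow m y = true ↔ ∃ k, y = pairPattern m k :=
  decide_eq_true_iff

lemma eq_virzaRow {m : ℕ} {g : (Fin (2 * m + 1) → Bool) → Bool}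
    (hg : ∀ y : Fin (2*m+1) → Bool, g y = true ↔
      ((∃ j : Fin m, ∀ i : Fin (2*m+1),
          y i = decide ((i : ℕ) = 2*(j : ℕ) ∨ (i : ℕ) = 2*(j : ℕ)+1)) ∨
       (∀ i : Fin (2*m+1), y i = decide ((i : ℕ) = 2*m)))) :
    g = virzaRow m := by
  funext y
  rw [Bool.eq_iff_iff, hg, virzaRow_eq_true_iff]
  constructor
  · rintro (⟨j, hj⟩ | h)
    · exact ⟨j.castSucc, funext hj⟩
    · refine ⟨Fin.last m, funext fun i => ?_⟩
      rw [h i]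
      simp only [pairPattern, Fin.val_last]
      exact decide_eq_decide.mpr (by omega)
  · rintro ⟨k, rfl⟩
    rcases Fin.eq_castSucc_or_eq_last k with ⟨j, rfl⟩ | rfl
    · exact Or.inl ⟨j, fun i => rfl⟩
    · refine Or.inr fun i => ?_
      simp only [pairPattern, Fin.val_last]
      exact decide_eq_decide.mpr (by omega)

lemma card_virzaRow_accept_le (m : ℕ) : Fintype.card {y // virzaRow m y = true} ≤ m + 1 := by
  have hsurj : Function.Surjective fun k : Fin (m + 1) =>
      (⟨pairPattern m k, virzaRow_eq_true_iff.mpr ⟨k, rfl⟩⟩ : {y // virzaRow m y = true}) :=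
    fun ⟨y, hy⟩ => by
      obtain ⟨k, rfl⟩ := virzaRow_eq_true_iff.mp hy
      exact ⟨k, rfl⟩
  simpa using Fintype.card_le_of_surjective _ hsurj

lemma eq_of_pairPattern_apply {m : ℕ} {k k' : Fin (m + 1)} {i : Fin (2 * m + 1)}
    (h : pairPattern m k i = true) (h' : pairPattern m k' i = true) : k = k' := by
  simp only [pairPattern, decide_eq_true_eq] at h h'
  ext
  omega

lemma three_le_hammingDist_pairPattern_of_lt {m : ℕ} {k k' : Fin (m + 1)} (hk : k < k') :
    3 ≤ hammingDist (pairPattern m k) (pairPattern m k') := by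
  have hk' := k'.isLt
  rw [Fin.lt_def] at hk
  let a : Fin (2 * m + 1) := ⟨2 * k, by omega⟩
  let b : Fin (2 * m + 1) := ⟨2 * k + 1, by omega⟩
  let c : Fin (2 * m + 1) := ⟨2 * k', by omega⟩
  have hsub : ({a, b, c} : Finset _) ⊆
      univ.filter fun i => pairPattern m k i ≠ pairPattern m k' i := by
    intro i hi
    simp only [Finset.mem_insert, Finset.mem_singleton] at hi
    rcases hi with rfl | rfl | rfl <;> simp [a, b, c, pairPattern] <;> omega
  have hcard : ({a, b, c} : Finset _).card = 3 := by
    rw [Finset.card_eq_three]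
    exact ⟨a, b, c, by simp [a, b, Fin.ext_iff], by simp [a, c, Fin.ext_iff]; omega,
      by simp [b, c, Fin.ext_iff]; omega, rfl⟩
  exact hcard ▸ Finset.card_le_card hsub

lemma three_le_hammingDist_pairPattern {m : ℕ} {k k' : Fin (m + 1)} (hk : k ≠ k') :
    3 ≤ hammingDist (pairPattern m k) (pairPattern m k') := by
  rcases hk.lt_or_gt with h | h
  · exact three_le_hammingDist_pairPattern_of_lt h
  · exact hammingDist_comm (pairPattern m k) _ ▸ three_le_hammingDist_pairPattern_of_lt h

lemma sensAt_virzaRow_le_one {m : ℕ} {y : Fin (2 * m + 1) → Bool} (hy : virzaRow m y = false) :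
    sensAt (virzaRow m) y ≤ 1 := by
  refine sensAt_le_one_of_three_le_hammingDist hy fun z w hz hw hzw => ?_
  obtain ⟨k, rfl⟩ := virzaRow_eq_true_iff.mp hz
  obtain ⟨k', rfl⟩ := virzaRow_eq_true_iff.mp hw
  exact three_le_hammingDist_pairPattern fun h => hzw (h ▸ rfl)

lemma virzaRow_zero (m : ℕ) : virzaRow m (fun _ => false) = false := by
  rw [← Bool.not_eq_true, virzaRow_eq_true_iff]
  rintro ⟨k, hk⟩
  simpa [pairPattern] using congrFun hk ⟨2 * k, by omega⟩

lemma one_le_sensAt_virzaRow_zero (m : ℕ) : 1 ≤ sensAt (virzaRow m) (fun _ => false) := by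
  refine Finset.card_pos.mpr ⟨⟨2 * m, by omega⟩, Finset.mem_filter.mpr ⟨mem_univ _, ?_⟩⟩
  rw [virzaRow_zero, ne_eq, Bool.not_eq_false, virzaRow_eq_true_iff]
  refine ⟨Fin.last m, funext fun i => ?_⟩
  have := i.isLt
  by_cases h : (i : ℕ) = 2 * m <;>
    simp [flipBit, Function.update_apply, pairPattern, Fin.ext_iff, h]
  omega

variable (m : ℕ)

def virza : (Fin (2 * m + 1) × Fin (2 * m + 1) → Bool) → Bool := orRows (virzaRow m)

lemma virza_zero : virza m (fun _ => false) = false :=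
  orRows_eq_false_iff.mpr fun _ => virzaRow_zero m

lemma bsAt_virza_le (x : Fin (2 * m + 1) × Fin (2 * m + 1) → Bool) :
    bsAt (virza m) x ≤ (2 * m + 1) * (m + 1) := by
  cases hx : virza m x
  · calc bsAt (virza m) x
        ≤ Fintype.card (Fin (2 * m + 1)) * Fintype.card {y // virzaRow m y = true} :=
          bsAt_orRows_le_of_false hx
      _ ≤ (2 * m + 1) * (m + 1) := by
          rw [Fintype.card_fin]
          exact Nat.mul_le_mul_left _ (card_virzaRow_accept_le m)
  · calc bsAt (virza m) x ≤ Fintype.card (Fin (2 * m + 1)) := bsAt_orRows_le_of_true hx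
      _ ≤ (2 * m + 1) * (m + 1) := by simp

lemma le_bsAt_virza_zero : (2 * m + 1) * (m + 1) ≤ bsAt (virza m) (fun _ => false) := by
  let Bl : Fin (2 * m + 1) × Fin (m + 1) → Finset (Fin (2 * m + 1) × Fin (2 * m + 1)) :=
    fun p => univ.filter fun z => z.1 = p.1 ∧ pairPattern m p.2 z.2 = true
  have hd : Pairwise fun p q => Disjoint (Bl p) (Bl q) := fun p q hpq =>
    Finset.disjoint_left.mpr fun z hp hq => hpq <| by
      simp only [Bl, Finset.mem_filter, Finset.mem_univ, true_and] at hp hq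
      exact Prod.ext (hp.1.symm.trans hq.1) (eq_of_pairPattern_apply hp.2 hq.2)
  have hs : ∀ p, virza m (flipBlock (fun _ => false) (Bl p)) ≠ virza m (fun _ => false) := by
    intro p
    rw [virza_zero, ne_eq, Bool.not_eq_false, virza, orRows_eq_true_iff]
    refine ⟨p.1, virzaRow_eq_true_iff.mpr ⟨p.2, funext fun j => ?_⟩⟩
    simp [row, flipBlock, Bl]
  simpa using le_bsAt Bl hd hs

lemma bs_virza : bs (virza m) = (2 * m + 1) * (m + 1) :=
  le_antisymm (Finset.sup_le fun x _ => bsAt_virza_le m x)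
    ((le_bsAt_virza_zero m).trans (Finset.le_sup (mem_univ _)))

lemma sensAt_virza_le (x : Fin (2 * m + 1) × Fin (2 * m + 1) → Bool) :
    sensAt (virza m) x ≤ 2 * m + 1 := by
  cases hx : virza m x
  · calc sensAt (virza m) x = ∑ i, sensAt (virzaRow m) (row x i) := sensAt_orRows_of_false hx
      _ ≤ ∑ _i : Fin (2 * m + 1), 1 :=
          Finset.sum_le_sum fun i _ => sensAt_virzaRow_le_one (orRows_eq_false_iff.mp hx i)
      _ = 2 * m + 1 := by simp
  · calc sensAt (virza m) x ≤ bsAt (virza m) x := sensAt_le_bsAt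
      _ ≤ 2 * m + 1 := (bsAt_orRows_le_of_true hx).trans_eq (Fintype.card_fin _)

lemma le_sensAt_virza_zero : 2 * m + 1 ≤ sensAt (virza m) (fun _ => false) :=
  calc 2 * m + 1 = ∑ _i : Fin (2 * m + 1), 1 := by simp
    _ ≤ ∑ i, sensAt (virzaRow m) (row (fun _ => false) i) :=
        Finset.sum_le_sum fun _ _ => one_le_sensAt_virzaRow_zero m
    _ = sensAt (virza m) (fun _ => false) := (sensAt_orRows_of_false (virza_zero m)).symm

lemma sens_virza : sens (virza m) = 2 * m + 1 :=
  le_antisymm (Finset.sup_le fun x _ => sensAt_virza_le m x)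
    ((le_sensAt_virza_zero m).trans (Finset.le_sup (mem_univ _)))

end Virza

theorem virza_bs_general (m : ℕ)
    (g : (Fin (2*m+1) → Bool) → Bool)
    (hg : ∀ y : Fin (2*m+1) → Bool, g y = true ↔
      ((∃ j : Fin m, ∀ i : Fin (2*m+1),
          y i = decide ((i : ℕ) = 2*(j : ℕ) ∨ (i : ℕ) = 2*(j : ℕ)+1)) ∨
       (∀ i : Fin (2*m+1), y i = decide ((i : ℕ) = 2*m))))
    (f : (Fin (2*m+1) × Fin (2*m+1) → Bool) → Bool)
    (hf : ∀ x : Fin (2*m+1) × Fin (2*m+1) → Bool,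
      f x = true ↔ ∃ i : Fin (2*m+1), g (fun j => x (i, j)) = true) :
    bs f = (2*m+1)*(m+1) ∧ 2 * bs f = (sens f)^2 + sens f := by
  obtain rfl : g = virzaRow m := eq_virzaRow hg
  obtain rfl : f = virza m :=
    funext fun x => Bool.eq_iff_iff.mpr ((hf x).trans orRows_eq_true_iff.symm)
  rw [bs_virza, sens_virza]
  exact ⟨rfl, by ring⟩

/-- Virza's function `f : {0,1}^{(2m+1)²} → {0,1}`, the OR of `2m+1` disjoint copies of
`g : {0,1}^{2m+1} → {0,1}` where `g y = 1` iff `y` is 1 exactly on some pair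
`{y_{2j-1}, y_{2j}}` (`j ∈ [m]`) or exactly on `y_{2m+1}`, has block sensitivity
`bs(f) = (2m+1)(m+1)`; consequently `bs(f) = (1/2)·s(f)² + (1/2)·s(f)`, stated over ℕ
as `2·bs(f) = s(f)² + s(f)`. -/
theorem virza_bs (m : ℕ) (hm : 1 ≤ m)
    (g : (Fin (2*m+1) → Bool) → Bool)
    (hg : ∀ y : Fin (2*m+1) → Bool, g y = true ↔
      ((∃ j : Fin m, ∀ i : Fin (2*m+1),
          y i = decide ((i : ℕ) = 2*(j : ℕ) ∨ (i : ℕ) = 2*(j : ℕ)+1)) ∨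
       (∀ i : Fin (2*m+1), y i = decide ((i : ℕ) = 2*m))))
    (f : (Fin (2*m+1) × Fin (2*m+1) → Bool) → Bool)
    (hf : ∀ x : Fin (2*m+1) × Fin (2*m+1) → Bool,
      f x = true ↔ ∃ i : Fin (2*m+1), g (fun j => x (i, j)) = true) :
    bs f = (2*m+1)*(m+1) ∧ 2 * bs f = (sens f)^2 + sens f :=
  virza_bs_general m g hg f hf
end

section
/- Let g : {0,1}^N → {0,1} be a Boolean function with g(0^N) = 0 and 0-sensitivity s_0(g) = 1, and let B_1, …, B_k ⊆ [N] be pairwise disjoint minimal sensitive blocks of g at the all-zeros input 0^N (i.e., g(0^{(B_i)}) = 1 for each i, and g(0^{(B')}) = 0 for every proper subset B' ⊊ B_i). For each i, the minimal 1-certificate subcube S_i containing 0^{(B_i)} (a set of inputs specified by fixing some coordinates to 0 and some to 1) must fix all coordinates of B_i to 1; moreover the subcubes S_1, …, S_k are pairwise distinct, and for some index i the number of coordinates that S_i fixes to 0 is at least 3(k−1)/2. -/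
/-- The subcube of `{0,1}^N` consisting of the inputs whose coordinates in `I` are
fixed to `0` and whose coordinates in `J` are fixed to `1`. -/
def subCube {ι : Type} (I J : Finset ι) : Set (ι → Bool) :=
  {x | (∀ i ∈ I, x i = false) ∧ ∀ j ∈ J, x j = true}

/-!
A 1-certificate containing `0^{(B)}` fixes all of `B` to `1`: otherwise it would contain an
input `0^{(B')}` with `B' ⊊ B`, which is a 0-input by minimality of `B`.

Since `s₀(g) = 1`, a 0-input has at most one sensitive coordinate. Let `B` and `C` be disjoint
minimal sensitive blocks whose certificates fix the zeros `I` and `I'`. For `c ∈ C`, the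
input `(C \ {c}) ∪ E` is a 0-input for every `E` avoiding `C ∪ I'`: adding `E` one coordinate at
a time, `c` stays sensitive, so no other coordinate can be. If `|I ∩ C| + |I' ∩ B| ≤ 2`, a suitable
such input has a second sensitive coordinate, a contradiction. Hence the certificates of any two
blocks fix together at least three zeros in each other's block, and since the blocks are
disjoint, averaging over all pairs gives the bound.
-/

open Finset

section DecidableEqIndex

variable {ι : Type} [DecidableEq ι] {g : (ι → Bool) → Bool}

def boolIndicator (X : Finset ι) : ι → Bool := fun j => decide (j ∈ X)

@[simp]
lemma boolIndicator_apply (X : Finset ι) (j : ι) : boolIndicator X j = decide (j ∈ X) := rfl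

lemma boolIndicator_empty : boolIndicator (∅ : Finset ι) = fun _ => false := by
  funext j
  simp

lemma flipBlock_false_eq_boolIndicator (X : Finset ι) :
    flipBlock (fun _ => false) X = boolIndicator X := by
  funext j
  by_cases h : j ∈ X <;> simp [flipBlock, h]

lemma flipBit_boolIndicator_of_notMem {X : Finset ι} {i : ι} (h : i ∉ X) :
    flipBit (boolIndicator X) i = boolIndicator (insert i X) := by
  funext j
  by_cases hj : j = i <;> simp [flipBit, hj, h]

lemma flipBit_boolIndicator_of_mem {X : Finset ι} {i : ι} (h : i ∈ X) :
    flipBit (boolIndicator X) i = boolIndicator (X.erase i) := by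
  funext j
  by_cases hj : j = i <;> simp [flipBit, hj, h]

lemma boolIndicator_mem_subCube {I J X : Finset ι} :
    boolIndicator X ∈ subCube I J ↔ Disjoint I X ∧ J ⊆ X := by
  simp [subCube, disjoint_left, subset_iff]

lemma exists_mem_disjoint_erase_of_card_inter_le_one {I C : Finset ι} (hC : C.Nonempty)
    (h : #(I ∩ C) ≤ 1) : ∃ c ∈ C, Disjoint I (C.erase c) := by
  obtain hempty | ⟨c, hc⟩ := (I ∩ C).eq_empty_or_nonempty
  · obtain ⟨c, hc⟩ := hC
    exact ⟨c, hc, (disjoint_iff_inter_eq_empty.2 hempty).mono_right (erase_subset c C)⟩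
  · refine ⟨c, (mem_inter.1 hc).2, disjoint_left.2 fun x hxI hxC => ?_⟩
    obtain ⟨hxc, hxC⟩ := mem_erase.1 hxC
    exact hxc (card_le_one.1 h x (mem_inter.2 ⟨hxI, hxC⟩) c hc)

lemma exists_ne_disjoint_erase_erase_of_card_inter_eq_two {I C : Finset ι} (h : #(I ∩ C) = 2) :
    ∃ c₁ ∈ C, ∃ c₂ ∈ C, c₁ ≠ c₂ ∧ Disjoint I ((C.erase c₁).erase c₂) := by
  obtain ⟨c₁, c₂, hne, hIC⟩ := card_eq_two.1 h
  have hc₁ : c₁ ∈ I ∩ C := by simp [hIC]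
  have hc₂ : c₂ ∈ I ∩ C := by simp [hIC]
  refine ⟨c₁, (mem_inter.1 hc₁).2, c₂, (mem_inter.1 hc₂).2, hne,
    disjoint_left.2 fun x hxI hxC => ?_⟩
  have hx : x ∈ I ∩ C := mem_inter.2 ⟨hxI, mem_of_mem_erase (mem_of_mem_erase hxC)⟩
  simp_all

lemma eq_true_of_certificate {I J X : Finset ι} (hcert : ∀ x ∈ subCube I J, g x = true)
    (hI : Disjoint I X) (hJ : J ⊆ X) : g (boolIndicator X) = true :=
  hcert _ (boolIndicator_mem_subCube.2 ⟨hI, hJ⟩)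

lemma subset_of_certificate_of_minimal {B I J : Finset ι}
    (hmin : ∀ B' ⊂ B, g (boolIndicator B') = false) (hmem : boolIndicator B ∈ subCube I J)
    (hcert : ∀ x ∈ subCube I J, g x = true) : B ⊆ J := by
  obtain ⟨hIB, hJB⟩ := boolIndicator_mem_subCube.1 hmem
  intro i hi
  by_contra hiJ
  have hone : g (boolIndicator (B.erase i)) = true :=
    eq_true_of_certificate hcert (hIB.mono_right (erase_subset i B))
      fun j hj => mem_erase.2 ⟨ne_of_mem_of_not_mem hj hiJ, hJB hj⟩
  simp [hmin _ (erase_ssubset hi)] at hone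

/-- A 1-certificate containing a minimal sensitive block `B` at `0` fixes exactly `B` to `1`
(`subset_of_certificate_of_minimal`), so it is recorded by `B` and its set `I` of zeros. -/
structure IsMinimalBlockCertificate (g : (ι → Bool) → Bool) (B I : Finset ι) : Prop where
  minimal : ∀ B' ⊂ B, g (boolIndicator B') = false
  disjoint : Disjoint I B
  certificate : ∀ x ∈ subCube I B, g x = true

lemma IsMinimalBlockCertificate.nonempty {B I : Finset ι} (h : IsMinimalBlockCertificate g B I)
    (hg0 : g (boolIndicator ∅) = false) : B.Nonempty := by
  rw [nonempty_iff_ne_empty]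
  rintro rfl
  simp [eq_true_of_certificate h.certificate (disjoint_empty_right I) subset_rfl] at hg0

section ZeroSensitivity

variable [Fintype ι]

lemma sensAt_le_sens0 {x : ι → Bool} (hx : g x = false) : sensAt g x ≤ sens0 g :=
  le_sup (by simpa using hx)

lemma false_of_two_sensitive (hs0 : sens0 g ≤ 1) {x : ι → Bool} (hx : g x = false) {i j : ι}
    (hij : i ≠ j) (hi : g (flipBit x i) = true) (hj : g (flipBit x j) = true) : False := by
  have htwo : 1 < sensAt g x := one_lt_card.2 ⟨i, by simp [hi, hx], j, by simp [hj, hx], hij⟩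
  have := sensAt_le_sens0 hx
  omega

namespace IsMinimalBlockCertificate

lemma eq_false_erase_union (hs0 : sens0 g ≤ 1) {C I' : Finset ι}
    (h : IsMinimalBlockCertificate g C I') {c : ι} (hc : c ∈ C) (E : Finset ι)
    (hEC : Disjoint E C) (hEI : Disjoint E I') :
    g (boolIndicator (C.erase c ∪ E)) = false := by
  induction E using Finset.induction_on with
  | empty => simpa using h.minimal _ (erase_ssubset hc)
  | insert e E he ih =>
    rw [disjoint_insert_left] at hEC hEI
    have hcE : c ∉ C.erase c ∪ E := by simpa using fun hcE => disjoint_left.1 hEC.2 hcE hc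
    have heE : e ∉ C.erase c ∪ E := by simp [hEC.1, he]
    rw [← Bool.not_eq_true]
    intro hone
    refine false_of_two_sensitive hs0 (ih hEC.2 hEI.2) (ne_of_mem_of_not_mem hc hEC.1) ?_ ?_
    · rw [flipBit_boolIndicator_of_notMem hcE, ← insert_union, insert_erase hc]
      exact eq_true_of_certificate h.certificate
        (disjoint_union_right.2 ⟨h.disjoint, hEI.2.symm⟩) subset_union_left
    · rwa [flipBit_boolIndicator_of_notMem heE, ← union_insert]

variable {B C I I' : Finset ι}

lemma false_of_disjoint_erase (hs0 : sens0 g ≤ 1) (hB : IsMinimalBlockCertificate g B I)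
    (hC : IsMinimalBlockCertificate g C I') (hBC : Disjoint B C) {b c : ι} (hb : b ∈ B)
    (hc : c ∈ C) (hI : Disjoint I (C.erase c)) (hI' : Disjoint I' (B.erase b)) : False := by
  have hzero := hC.eq_false_erase_union hs0 hc (B.erase b) (hBC.mono_left (erase_subset b B))
    hI'.symm
  have hbX : b ∉ C.erase c ∪ B.erase b := by simp [disjoint_left.1 hBC hb]
  have hcX : c ∉ C.erase c ∪ B.erase b := by simp [disjoint_right.1 hBC hc]
  refine false_of_two_sensitive hs0 hzero (ne_of_mem_of_not_mem hb (disjoint_right.1 hBC hc))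
    ?_ ?_
  · rw [flipBit_boolIndicator_of_notMem hbX, ← union_insert, insert_erase hb]
    exact eq_true_of_certificate hB.certificate (disjoint_union_right.2 ⟨hI, hB.disjoint⟩)
      subset_union_right
  · rw [flipBit_boolIndicator_of_notMem hcX, ← insert_union, insert_erase hc]
    exact eq_true_of_certificate hC.certificate (disjoint_union_right.2 ⟨hC.disjoint, hI'⟩)
      subset_union_left

lemma false_of_disjoint_erase_erase (hs0 : sens0 g ≤ 1) (hB : IsMinimalBlockCertificate g B I)
    (hC : IsMinimalBlockCertificate g C I') (hBC : Disjoint B C) {c₁ c₂ : ι} (hc₁ : c₁ ∈ C)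
    (hc₂ : c₂ ∈ C) (hne : c₁ ≠ c₂) (hI : Disjoint I ((C.erase c₁).erase c₂))
    (hI' : Disjoint I' B) : False := by
  have hzero := hC.eq_false_erase_union hs0 hc₁ B hBC hI'.symm
  have hc₁X : c₁ ∉ C.erase c₁ ∪ B := by simp [disjoint_right.1 hBC hc₁]
  have hc₂X : c₂ ∈ C.erase c₁ ∪ B := by simp [hne.symm, hc₂]
  refine false_of_two_sensitive hs0 hzero hne ?_ ?_
  · rw [flipBit_boolIndicator_of_notMem hc₁X, ← insert_union, insert_erase hc₁]
    exact eq_true_of_certificate hC.certificate (disjoint_union_right.2 ⟨hC.disjoint, hI'⟩)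
      subset_union_left
  · rw [flipBit_boolIndicator_of_mem hc₂X, erase_union_distrib,
      erase_eq_of_notMem (disjoint_right.1 hBC hc₂)]
    exact eq_true_of_certificate hB.certificate (disjoint_union_right.2 ⟨hI, hB.disjoint⟩)
      subset_union_right

theorem three_le_card_inter_add_card_inter (hs0 : sens0 g ≤ 1)
    (hg0 : g (boolIndicator ∅) = false) (hB : IsMinimalBlockCertificate g B I)
    (hC : IsMinimalBlockCertificate g C I') (hBC : Disjoint B C) :
    3 ≤ #(I ∩ C) + #(I' ∩ B) := by
  by_contra! hlt
  obtain hIC | hIC := le_or_gt #(I ∩ C) 1 <;> obtain hI'B | hI'B := le_or_gt #(I' ∩ B) 1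
  · obtain ⟨c, hc, hI⟩ := exists_mem_disjoint_erase_of_card_inter_le_one (hC.nonempty hg0) hIC
    obtain ⟨b, hb, hI'⟩ := exists_mem_disjoint_erase_of_card_inter_le_one (hB.nonempty hg0) hI'B
    exact false_of_disjoint_erase hs0 hB hC hBC hb hc hI hI'
  · obtain ⟨b₁, hb₁, b₂, hb₂, hne, hI'⟩ :=
      exists_ne_disjoint_erase_erase_of_card_inter_eq_two (I := I') (C := B) (by omega)
    exact false_of_disjoint_erase_erase hs0 hC hB hBC.symm hb₁ hb₂ hne hI'
      (disjoint_iff_inter_eq_empty.2 (card_eq_zero.1 (by omega)))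
  · obtain ⟨c₁, hc₁, c₂, hc₂, hne, hI⟩ :=
      exists_ne_disjoint_erase_erase_of_card_inter_eq_two (I := I) (C := C) (by omega)
    exact false_of_disjoint_erase_erase hs0 hB hC hBC hc₁ hc₂ hne hI
      (disjoint_iff_inter_eq_empty.2 (card_eq_zero.1 (by omega)))
  · omega

end IsMinimalBlockCertificate

end ZeroSensitivity

end DecidableEqIndex

lemma sum_card_inter_le_card {κ ι : Type*} [Fintype κ] [DecidableEq ι] {B : κ → Finset ι}
    (hB : Pairwise fun p q => Disjoint (B p) (B q)) (S : Finset ι) : ∑ q, #(S ∩ B q) ≤ #S := by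
  rw [← card_biUnion fun q _ r _ hqr =>
    (hB hqr).mono inter_subset_right inter_subset_right]
  exact card_le_card (biUnion_subset.2 fun q _ => inter_subset_left)

theorem exists_mul_card_sub_one_le_two_mul_card {κ ι : Type*} [Fintype κ] [Nonempty κ]
    [DecidableEq ι] {I B : κ → Finset ι} (hB : Pairwise fun p q => Disjoint (B p) (B q)) {m : ℕ}
    (h : ∀ p q, p ≠ q → m ≤ #(I p ∩ B q) + #(I q ∩ B p)) :
    ∃ p, m * (Fintype.card κ - 1) ≤ 2 * #(I p) := by
  classical
  have hrow : ∀ p, m * (Fintype.card κ - 1) ≤ ∑ q, (#(I p ∩ B q) + #(I q ∩ B p)) := fun p =>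
    calc m * (Fintype.card κ - 1) = ∑ q ∈ univ.erase p, m := by
          simp [card_erase_of_mem, mul_comm]
      _ ≤ ∑ q ∈ univ.erase p, (#(I p ∩ B q) + #(I q ∩ B p)) :=
          sum_le_sum fun q hq => h p q (ne_of_mem_erase hq).symm
      _ ≤ ∑ q, (#(I p ∩ B q) + #(I q ∩ B p)) := sum_le_sum_of_subset (erase_subset p univ)
  obtain ⟨p, -, hp⟩ := exists_le_of_sum_le univ_nonempty <|
    calc ∑ p : κ, m * (Fintype.card κ - 1)
        ≤ ∑ p, ∑ q, (#(I p ∩ B q) + #(I q ∩ B p)) := sum_le_sum fun p _ => hrow p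
      _ = 2 * ∑ p, ∑ q, #(I p ∩ B q) := by
          simp only [sum_add_distrib]
          rw [sum_comm (f := fun p q => #(I q ∩ B p))]
          ring
      _ ≤ 2 * ∑ p, #(I p) :=
          Nat.mul_le_mul_left 2 (sum_le_sum fun p _ => sum_card_inter_le_card hB _)
      _ = ∑ p, 2 * #(I p) := mul_sum ..
  exact ⟨p, hp⟩

theorem minimal_certificate_subcubes_general {N k : ℕ} (hk : 1 ≤ k) (g : (Fin N → Bool) → Bool)
    (hg0 : g (fun _ => false) = false) (hs0 : sens0 g = 1)
    (B : Fin k → Finset (Fin N))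
    (hdisj : Pairwise fun p q => Disjoint (B p) (B q))
    (hmin : ∀ p, ∀ B' ⊂ B p, g (flipBlock (fun _ => false) B') = false)
    (I J : Fin k → Finset (Fin N))
    (hmem : ∀ p, flipBlock (fun _ => false) (B p) ∈ subCube (I p) (J p))
    (hcert : ∀ p, ∀ x ∈ subCube (I p) (J p), g x = true) :
    (∀ p, B p ⊆ J p) ∧
    (∀ p q, p ≠ q → subCube (I p) (J p) ≠ subCube (I q) (J q)) ∧
    ∃ p, 3 * (k - 1) ≤ 2 * (I p).card := by
  simp only [flipBlock_false_eq_boolIndicator] at hmin hmem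
  rw [← boolIndicator_empty] at hg0
  have hBJ : ∀ p, B p ⊆ J p := fun p =>
    subset_of_certificate_of_minimal (hmin p) (hmem p) (hcert p)
  have hJB : ∀ p, J p = B p := fun p =>
    (boolIndicator_mem_subCube.1 (hmem p)).2.antisymm (hBJ p)
  have hblock : ∀ p, IsMinimalBlockCertificate g (B p) (I p) := fun p =>
    ⟨hmin p, (boolIndicator_mem_subCube.1 (hmem p)).1, hJB p ▸ hcert p⟩
  refine ⟨hBJ, fun p q hpq hsame => ?_, ?_⟩
  · obtain ⟨i, hi⟩ := (hblock p).nonempty hg0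
    have hJpBq : J p ⊆ B q := (boolIndicator_mem_subCube.1 (hsame ▸ hmem q)).2
    exact disjoint_left.1 (hdisj hpq) hi (hJpBq (hBJ p hi))
  · have : Nonempty (Fin k) := ⟨⟨0, hk⟩⟩
    simpa using exists_mul_card_sub_one_le_two_mul_card hdisj fun p q hpq =>
      (hblock p).three_le_card_inter_add_card_inter hs0.le hg0 (hblock q) (hdisj hpq)

/-- Let `g : {0,1}^N → {0,1}` satisfy `g(0^N) = 0` and `s₀(g) = 1`, and let
`B_1, …, B_k` be pairwise disjoint minimal sensitive blocks of `g` at `0^N`.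
If for each `i` the subcube `S_i = subCube (I i) (J i)` is a 1-certificate subcube
containing `0^{(B_i)}` that is minimal at `0^{(B_i)}` (no strictly larger subcube
containing `0^{(B_i)}` is a 1-certificate subcube), then each `S_i` fixes all
coordinates of `B_i` to 1, the subcubes `S_1, …, S_k` are pairwise distinct, and for
some `i` the number of coordinates fixed to 0 by `S_i` is at least `3(k−1)/2`
(stated over ℕ as `3·(k−1) ≤ 2·|I i|`). -/
theorem minimal_certificate_subcubes {N k : ℕ} (hk : 1 ≤ k) (g : (Fin N → Bool) → Bool)
    (hg0 : g (fun _ => false) = false) (hs0 : sens0 g = 1)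
    (B : Fin k → Finset (Fin N))
    (hdisj : Pairwise fun p q => Disjoint (B p) (B q))
    (hsens : ∀ p, g (flipBlock (fun _ => false) (B p)) = true)
    (hmin : ∀ p, ∀ B' ⊂ B p, g (flipBlock (fun _ => false) B') = false)
    (I J : Fin k → Finset (Fin N))
    (hIJ : ∀ p, Disjoint (I p) (J p))
    (hmem : ∀ p, flipBlock (fun _ => false) (B p) ∈ subCube (I p) (J p))
    (hcert : ∀ p, ∀ x ∈ subCube (I p) (J p), g x = true)
    (hminimal : ∀ p, ∀ I' J' : Finset (Fin N), Disjoint I' J' →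
      flipBlock (fun _ => false) (B p) ∈ subCube I' J' →
      subCube (I p) (J p) ⊂ subCube I' J' →
      ¬ (∀ x ∈ subCube I' J', g x = true)) :
    (∀ p, B p ⊆ J p) ∧
    (∀ p q, p ≠ q → subCube (I p) (J p) ≠ subCube (I q) (J q)) ∧
    ∃ p, 3 * (k - 1) ≤ 2 * (I p).card :=
  minimal_certificate_subcubes_general hk g hg0 hs0 B hdisj hmin I J hmem hcert
end
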